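/- Let σ ∈ Λ²₊V be a unit vector. Then for all X, Y ∈ V the 2-vector X∧Y − (K_σX)∧(K_σY) is orthogonal to Λ²₋V, i.e. it lies in Λ²₊V. -/

import Mathlib

/-!
Fix a positively oriented orthonormal frame `b` of `V`. The six 2-vectors `b₀∧b₁ ± b₂∧b₃`,
`b₀∧b₂ ± b₃∧b₁`, `b₀∧b₃ ± b₁∧b₂` form an orthonormal basis of `Λ²V` in which `⋆` is diagonal with
eigenvalues `+1` (for `+`) and `-1` (for `-`); in particular `⋆` is self-adjoint, so `Λ²₊V ⊥ Λ²₋V`.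
Writing `σ = ∑ pᵢ (self-dual basis vector)`, the coordinates of `K_σ` in `b` are explicit, and a
direct computation gives `⟪τ, K_σX ∧ K_σY⟫ = (∑ pᵢ²) ⟪τ, X ∧ Y⟫ = ⟪τ, X ∧ Y⟫` for every
anti-self-dual basis vector `τ`. So `X∧Y − K_σX∧K_σY` has no anti-self-dual component.
-/

open scoped RealInnerProductSpace

namespace OrthonormalBasis

variable {ι κ L : Type*} [Fintype ι] [Fintype κ] [NormedAddCommGroup L] [InnerProductSpace ℝ L]
  {e : OrthonormalBasis (ι ⊕ κ) ℝ L} {H : L →ₗ[ℝ] L}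

theorem eq_sum_inl_of_inner_inr_eq_zero {z : L} (hz : ∀ k, ⟪e (.inr k), z⟫ = 0) :
    z = ∑ i, ⟪e (.inl i), z⟫ • e (.inl i) := by
  conv_lhs => rw [← e.sum_repr' z]
  simp [Fintype.sum_sum_type, hz]

theorem sum_inner_inl_sq_of_inner_inr_eq_zero {z : L} (hz : ∀ k, ⟪e (.inr k), z⟫ = 0) :
    ∑ i, ⟪e (.inl i), z⟫ ^ 2 = ‖z‖ ^ 2 := by
  rw [← real_inner_self_eq_norm_sq, ← e.sum_inner_mul_inner z z]
  simp [Fintype.sum_sum_type, real_inner_comm _ z, hz, sq]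

theorem apply_eq_sum_sub_sum (hl : ∀ i, H (e (.inl i)) = e (.inl i))
    (hr : ∀ k, H (e (.inr k)) = -e (.inr k)) (z : L) :
    H z = ∑ i, ⟪e (.inl i), z⟫ • e (.inl i) - ∑ k, ⟪e (.inr k), z⟫ • e (.inr k) := by
  conv_lhs => rw [← e.sum_repr' z]
  simp [Fintype.sum_sum_type, hl, hr, sub_eq_add_neg]

theorem isSymmetric_of_apply_inl_of_apply_inr (hl : ∀ i, H (e (.inl i)) = e (.inl i))
    (hr : ∀ k, H (e (.inr k)) = -e (.inr k)) : H.IsSymmetric := by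
  intro x y
  simp only [apply_eq_sum_sub_sum hl hr, inner_sub_left, inner_sub_right, sum_inner, inner_sum,
    real_inner_smul_left, real_inner_smul_right, real_inner_comm x]
  simp only [mul_comm]

theorem apply_eq_self_of_inner_inr_eq_zero (hl : ∀ i, H (e (.inl i)) = e (.inl i))
    (hr : ∀ k, H (e (.inr k)) = -e (.inr k)) {z : L} (hz : ∀ k, ⟪e (.inr k), z⟫ = 0) :
    H z = z := by
  rw [apply_eq_sum_sub_sum hl hr]
  simpa [hz] using (eq_sum_inl_of_inner_inr_eq_zero hz).symm

end OrthonormalBasis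

theorem LinearMap.IsSymmetric.inner_eq_zero_of_apply_eq_self_of_apply_eq_neg {L : Type*}
    [NormedAddCommGroup L] [InnerProductSpace ℝ L] {H : L →ₗ[ℝ] L} (hH : H.IsSymmetric)
    {z τ : L} (hz : H z = z) (hτ : H τ = -τ) : ⟪z, τ⟫ = 0 := by
  have h := hH z τ
  rw [hz, hτ, inner_neg_right] at h
  linarith

section Wedge

variable {V L : Type*} [NormedAddCommGroup V] [InnerProductSpace ℝ V]
  [NormedAddCommGroup L] [InnerProductSpace ℝ L]

def hodgeFrame (wedge : V →ₗ[ℝ] V →ₗ[ℝ] L) (b : Fin 4 → V) : Fin 3 ⊕ Fin 3 → L :=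
  Sum.elim
    ![wedge (b 0) (b 1) + wedge (b 2) (b 3), wedge (b 0) (b 2) + wedge (b 3) (b 1),
      wedge (b 0) (b 3) + wedge (b 1) (b 2)]
    ![wedge (b 0) (b 1) - wedge (b 2) (b 3), wedge (b 0) (b 2) - wedge (b 3) (b 1),
      wedge (b 0) (b 3) - wedge (b 1) (b 2)]

variable {wedge : V →ₗ[ℝ] V →ₗ[ℝ] L}

theorem wedge_swap (wedge_self : ∀ v, wedge v v = 0) (u v : V) :
    wedge v u = -wedge u v := by
  have h := wedge_self (u + v)
  simp only [map_add, LinearMap.add_apply, wedge_self, zero_add, add_zero] at h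
  exact eq_neg_of_add_eq_zero_left h

theorem wedge_sum_smul_eq_sum_smul_hodgeFrame (wedge_self : ∀ v, wedge v v = 0)
    (b : Fin 4 → V) (x y : Fin 4 → ℝ) :
    wedge (∑ i, x i • b i) (∑ j, y j • b j) =
      ∑ a, Sum.elim
        ![(x 0 * y 1 - x 1 * y 0 + x 2 * y 3 - x 3 * y 2) / 2,
          (x 0 * y 2 - x 2 * y 0 + x 3 * y 1 - x 1 * y 3) / 2,
          (x 0 * y 3 - x 3 * y 0 + x 1 * y 2 - x 2 * y 1) / 2]
        ![(x 0 * y 1 - x 1 * y 0 - x 2 * y 3 + x 3 * y 2) / 2,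
          (x 0 * y 2 - x 2 * y 0 - x 3 * y 1 + x 1 * y 3) / 2,
          (x 0 * y 3 - x 3 * y 0 - x 1 * y 2 + x 2 * y 1) / 2] a •
        hodgeFrame wedge b a := by
  simp only [Fin.sum_univ_four, map_add, map_smul, LinearMap.add_apply, LinearMap.smul_apply,
    Fintype.sum_sum_type, Fin.sum_univ_three, hodgeFrame, wedge_self,
    wedge_swap wedge_self (b 0), wedge_swap wedge_self (b 1) (b 2),
    wedge_swap wedge_self (b 2) (b 3), wedge_swap wedge_self (b 3) (b 1), Sum.elim_inl,
    Sum.elim_inr, Matrix.cons_val_zero, Matrix.cons_val_one, Matrix.cons_val_two,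
    Matrix.tail_cons, Matrix.head_cons]
  module

theorem span_hodgeFrame (wedge_self : ∀ v, wedge v v = 0)
    (wedge_span : Submodule.span ℝ {x : L | ∃ u v : V, wedge u v = x} = ⊤)
    (b : OrthonormalBasis (Fin 4) ℝ V) :
    ⊤ ≤ Submodule.span ℝ (Set.range (hodgeFrame wedge b)) := by
  rw [← wedge_span, Submodule.span_le]
  rintro _ ⟨u, v, rfl⟩
  rw [← b.sum_repr' u, ← b.sum_repr' v, wedge_sum_smul_eq_sum_smul_hodgeFrame wedge_self]
  exact Submodule.sum_mem _ fun a _ => Submodule.smul_mem _ _ (Submodule.subset_span ⟨a, rfl⟩)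

theorem orthonormal_hodgeFrame
    (inner_wedge : ∀ v₁ v₂ v₃ v₄ : V, ⟪wedge v₁ v₂, wedge v₃ v₄⟫ =
      (1 / 2) * (⟪v₁, v₃⟫ * ⟪v₂, v₄⟫ - ⟪v₁, v₄⟫ * ⟪v₂, v₃⟫))
    {b : Fin 4 → V} (hb : Orthonormal ℝ b) :
    Orthonormal ℝ (hodgeFrame wedge b) := by
  have hb' := orthonormal_iff_ite.mp hb
  rw [orthonormal_iff_ite]
  rintro (i | i) (j | j) <;> fin_cases i <;> fin_cases j <;>
    simp [hodgeFrame, inner_add_left, inner_add_right, inner_sub_left, inner_sub_right,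
      inner_wedge, hb', -inner_self_eq_norm_sq_to_K] <;> norm_num

section Hodge

variable {hodge : L →ₗ[ℝ] L} (hodge_hodge : ∀ x, hodge (hodge x) = x) {b : Fin 4 → V}
  (hb : hodge (wedge (b 0) (b 1)) = wedge (b 2) (b 3) ∧
    hodge (wedge (b 0) (b 2)) = wedge (b 3) (b 1) ∧
    hodge (wedge (b 0) (b 3)) = wedge (b 1) (b 2))

include hodge_hodge hb

theorem hodge_hodgeFrame_inl (k : Fin 3) :
    hodge (hodgeFrame wedge b (.inl k)) = hodgeFrame wedge b (.inl k) := by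
  obtain ⟨h01, h02, h03⟩ := hb
  fin_cases k <;> simp [hodgeFrame, ← h01, ← h02, ← h03, hodge_hodge, add_comm]

theorem hodge_hodgeFrame_inr (k : Fin 3) :
    hodge (hodgeFrame wedge b (.inr k)) = -hodgeFrame wedge b (.inr k) := by
  obtain ⟨h01, h02, h03⟩ := hb
  fin_cases k <;> simp [hodgeFrame, ← h01, ← h02, ← h03, hodge_hodge]

end Hodge

section ComplexStructure

variable (inner_wedge : ∀ v₁ v₂ v₃ v₄ : V, ⟪wedge v₁ v₂, wedge v₃ v₄⟫ =
    (1 / 2) * (⟪v₁, v₃⟫ * ⟪v₂, v₄⟫ - ⟪v₁, v₄⟫ * ⟪v₂, v₃⟫))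
  {b : Fin 4 → V} (hb : Orthonormal ℝ b) (p : Fin 3 → ℝ) {K : V →ₗ[ℝ] V}
  (hK : ∀ X Y, ⟪K X, Y⟫ = 2 * ⟪∑ i, p i • hodgeFrame wedge b (.inl i), wedge X Y⟫)

include inner_wedge hb hK

theorem inner_basis_apply_eq (X : V) (j : Fin 4) :
    ⟪b j, K X⟫ =
      ![-(p 0 * ⟪b 1, X⟫ + p 1 * ⟪b 2, X⟫ + p 2 * ⟪b 3, X⟫),
        p 0 * ⟪b 0, X⟫ - p 2 * ⟪b 2, X⟫ + p 1 * ⟪b 3, X⟫,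
        p 1 * ⟪b 0, X⟫ + p 2 * ⟪b 1, X⟫ - p 0 * ⟪b 3, X⟫,
        p 2 * ⟪b 0, X⟫ - p 1 * ⟪b 1, X⟫ + p 0 * ⟪b 2, X⟫] j := by
  have hb' := orthonormal_iff_ite.mp hb
  rw [real_inner_comm, hK]
  fin_cases j <;>
    simp [Fin.sum_univ_three, hodgeFrame, inner_add_left, real_inner_smul_left, inner_wedge, hb',
      real_inner_comm X, -inner_self_eq_norm_sq_to_K] <;> ring

theorem inner_hodgeFrame_inr_wedge_apply_apply (k : Fin 3) (X Y : V) :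
    ⟪hodgeFrame wedge b (.inr k), wedge (K X) (K Y)⟫ =
      (∑ i, p i ^ 2) * ⟪hodgeFrame wedge b (.inr k), wedge X Y⟫ := by
  have hKX := inner_basis_apply_eq inner_wedge hb p hK X
  have hKY := inner_basis_apply_eq inner_wedge hb p hK Y
  fin_cases k <;>
    simp [Fin.sum_univ_three, hodgeFrame, inner_sub_left, inner_wedge, hKX, hKY] <;> ring

end ComplexStructure

end Wedge

/-- Let `V` be a 4-dimensional oriented real inner product space with Hodge
star `⋆` on `Λ²V`, and let `σ ∈ Λ²₊V` be a unit vector.  Then for all `X, Y ∈ V` the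
2-vector `X∧Y − (K_σX)∧(K_σY)` is orthogonal to `Λ²₋V`, i.e. it lies in `Λ²₊V`. -/
theorem stmt_7 {V L : Type*}
    [NormedAddCommGroup V] [InnerProductSpace ℝ V]
    [NormedAddCommGroup L] [InnerProductSpace ℝ L]
    (h4 : Module.finrank ℝ V = 4)
    (o : Orientation ℝ V (Fin 4))
    (wedge : V →ₗ[ℝ] V →ₗ[ℝ] L)
    (wedge_self : ∀ v : V, wedge v v = 0)
    (wedge_span : Submodule.span ℝ {x : L | ∃ u v : V, wedge u v = x} = ⊤)
    (inner_wedge : ∀ v₁ v₂ v₃ v₄ : V,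
      ⟪wedge v₁ v₂, wedge v₃ v₄⟫ =
        (1 / 2) * (⟪v₁, v₃⟫ * ⟪v₂, v₄⟫ - ⟪v₁, v₄⟫ * ⟪v₂, v₃⟫))
    (hodge : L →ₗ[ℝ] L)
    (hodge_hodge : ∀ x : L, hodge (hodge x) = x)
    (hodge_wedge : ∀ b : OrthonormalBasis (Fin 4) ℝ V, b.toBasis.orientation = o →
      hodge (wedge (b 0) (b 1)) = wedge (b 2) (b 3) ∧
      hodge (wedge (b 0) (b 2)) = wedge (b 3) (b 1) ∧
      hodge (wedge (b 0) (b 3)) = wedge (b 1) (b 2))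
    (σ : L) (hσ : hodge σ = σ) (hσ1 : ‖σ‖ = 1)
    (K : V →ₗ[ℝ] V)
    (hK : ∀ X Y : V, ⟪K X, Y⟫ = 2 * ⟪σ, wedge X Y⟫) :
    ∀ X Y : V,
      (∀ τ : L, hodge τ = -τ → ⟪wedge X Y - wedge (K X) (K Y), τ⟫ = 0) ∧
      hodge (wedge X Y - wedge (K X) (K Y)) = wedge X Y - wedge (K X) (K Y) := by
  obtain ⟨b, hbo⟩ : ∃ b : OrthonormalBasis (Fin 4) ℝ V, b.toBasis.orientation = o :=
    ⟨o.finOrthonormalBasis (by norm_num) h4, o.finOrthonormalBasis_orientation _ _⟩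
  let e := OrthonormalBasis.mk (orthonormal_hodgeFrame inner_wedge b.orthonormal)
    (span_hodgeFrame wedge_self wedge_span b)
  have he : ⇑e = hodgeFrame wedge b := OrthonormalBasis.coe_mk _ _
  have hl : ∀ i, hodge (e (.inl i)) = e (.inl i) := by
    rw [he]; exact hodge_hodgeFrame_inl hodge_hodge (hodge_wedge b hbo)
  have hr : ∀ k, hodge (e (.inr k)) = -e (.inr k) := by
    rw [he]; exact hodge_hodgeFrame_inr hodge_hodge (hodge_wedge b hbo)
  have hsymm := OrthonormalBasis.isSymmetric_of_apply_inl_of_apply_inr hl hr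
  have hσ_inr (k : Fin 3) : ⟪e (.inr k), σ⟫ = 0 := by
    rw [real_inner_comm]; exact hsymm.inner_eq_zero_of_apply_eq_self_of_apply_eq_neg hσ (hr k)
  set p := fun i => ⟪e (.inl i), σ⟫
  have hp : ∑ i, p i ^ 2 = 1 := by
    rw [OrthonormalBasis.sum_inner_inl_sq_of_inner_inr_eq_zero hσ_inr, hσ1, one_pow]
  have hσp : σ = ∑ i, p i • hodgeFrame wedge b (.inl i) := by
    rw [← he]; exact OrthonormalBasis.eq_sum_inl_of_inner_inr_eq_zero hσ_inr
  have hKp : ∀ X Y, ⟪K X, Y⟫ = 2 * ⟪∑ i, p i • hodgeFrame wedge b (.inl i), wedge X Y⟫ := by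
    intro X Y; rw [hK, ← hσp]
  intro X Y
  have hfix : hodge (wedge X Y - wedge (K X) (K Y)) = wedge X Y - wedge (K X) (K Y) := by
    refine OrthonormalBasis.apply_eq_self_of_inner_inr_eq_zero hl hr fun k => ?_
    rw [he, inner_sub_right,
      inner_hodgeFrame_inr_wedge_apply_apply inner_wedge b.orthonormal p hKp, hp, one_mul, sub_self]
  exact ⟨fun τ hτ => hsymm.inner_eq_zero_of_apply_eq_self_of_apply_eq_neg hfix hτ, hfix⟩
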